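/- arXiv:1412.6176 — 3 statements merged into one kernel-verified Lean document; each statement's English description precedes it below -/
import Mathlib

section
/- Let p be a prime, P a finite p-group, and M a nonzero F_p P-module on which P acts uniserially. Then there exists an element a_0 of the group algebra F_p P such that a_0·M = C_M(P) and a_0·[P,M] = 0. -/
/-!
Put `N₀ = M` and `N_{k+1} = [P, N_k]`. Uniseriality rules out `[P, N] = N ≠ 0`, so this
decreasing series of a finite module reaches `0`: there is `k` with `N_k ≠ 0 = N_{k+1}`.
The elements `a` of the group algebra with `a • N_j ⊆ N_{k+j}` for all `j` form a left ideal
`A_k`, and `(g - 1) A_k ⊆ A_{k+1}` shows by induction that `N_k` is spanned by `A_k • M`.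
Hence some `a ∈ A_k` has `a • M ≠ 0`; it kills `N₁ = [P, M]` and maps `M` into
`N_k ⊆ C_M(P)`. Since `[P, C_M(P)] = 0`, uniseriality gives `|C_M(P)| = p`, so the nonzero
subgroup `a • M` is all of it.
-/

variable (p : ℕ) (P : Type) [Group P]
variable (M : Type) [AddCommGroup M] [Module (ZMod p) M]
  [Module (MonoidAlgebra (ZMod p) P) M]
  [IsScalarTower (ZMod p) (MonoidAlgebra (ZMod p) P) M]

/-- The fixed-point subspace `C_M(P)` of an `F_p P`-module `M`. -/
def fixedPts : Submodule (ZMod p) M where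
  carrier := {m | ∀ g : P, MonoidAlgebra.of (ZMod p) P g • m = m}
  add_mem' := by
    intro a b ha hb g
    rw [smul_add, ha g, hb g]
  zero_mem' := by
    intro g
    rw [smul_zero]
  smul_mem' := by
    intro c m hm g
    rw [← algebraMap_smul (MonoidAlgebra (ZMod p) P) c m, ← mul_smul, ← Algebra.commutes,
      mul_smul, hm g, algebraMap_smul]

/-- The submodule `[P, N]` of an `F_p P`-module `M` spanned by the elements
`g • m - m` with `g ∈ P`, `m ∈ N`. -/
noncomputable def bracketSub (N : Submodule (MonoidAlgebra (ZMod p) P) M) :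
    Submodule (MonoidAlgebra (ZMod p) P) M :=
  Submodule.span (MonoidAlgebra (ZMod p) P)
    {x | ∃ g : P, ∃ m ∈ N, x = MonoidAlgebra.of (ZMod p) P g • m - m}

/-- An `F_p P`-module `M` is uniserial if `[P, N]` has (additive) index `p` in `N`
for every nonzero submodule `N` of `M`. -/
def UniserialFpP : Prop :=
  ∀ N : Submodule (MonoidAlgebra (ZMod p) P) M, N ≠ ⊥ →
    (bracketSub p P M N).toAddSubgroup.relIndex N.toAddSubgroup = p

open Pointwise in
theorem Submodule.smul_mem_span_smul_of_mul_mem {R M : Type*} [Semiring R] [AddCommMonoid M]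
    [Module R M] {A B : Submodule R R} {s : Set M} {b : R} (hb : ∀ a ∈ A, b * a ∈ B) {x : M}
    (hx : x ∈ Submodule.span R ((A : Set R) • s)) :
    b • x ∈ Submodule.span R ((B : Set R) • s) := by
  induction hx using Submodule.span_induction generalizing b with
  | mem y hy =>
    obtain ⟨a, ha, m, hm, rfl⟩ := hy
    rw [← mul_smul]
    exact Submodule.subset_span (Set.smul_mem_smul (hb a ha) hm)
  | zero => rw [smul_zero]; exact zero_mem _
  | add y z _ _ hy hz => rw [smul_add]; exact add_mem (hy hb) (hz hb)
  | smul r y _ hy =>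
    rw [← mul_smul]
    exact hy fun a ha => mul_assoc b r a ▸ hb _ (A.smul_mem r ha)

theorem AddSubgroup.eq_of_le_of_card_prime {G : Type*} [AddGroup G] {H K : AddSubgroup G}
    (hle : H ≤ K) (hH : H ≠ ⊥) (hK : (Nat.card K).Prime) : H = K := by
  have : Finite K := Nat.finite_of_card_ne_zero hK.ne_zero
  refine AddSubgroup.eq_of_le_of_card_ge hle (le_of_eq ?_)
  obtain h | h := (Nat.dvd_prime hK).1 (AddSubgroup.card_dvd_of_le hle)
  · exact absurd (AddSubgroup.card_eq_one.1 h) hH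
  · exact h.symm

section Series

omit [Module (ZMod p) M] [IsScalarTower (ZMod p) (MonoidAlgebra (ZMod p) P) M]

noncomputable def bracketSeries (k : ℕ) : Submodule (MonoidAlgebra (ZMod p) P) M :=
  (bracketSub p P M)^[k] ⊤

def shiftIdeal (k : ℕ) :
    Submodule (MonoidAlgebra (ZMod p) P) (MonoidAlgebra (ZMod p) P) where
  carrier := {a | ∀ j, ∀ x ∈ bracketSeries p P M j, a • x ∈ bracketSeries p P M (k + j)}
  add_mem' ha hb j x hx := by rw [add_smul]; exact add_mem (ha j x hx) (hb j x hx)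
  zero_mem' j x _ := by rw [zero_smul]; exact zero_mem _
  smul_mem' r a ha j x hx := by
    rw [smul_eq_mul, mul_smul]; exact Submodule.smul_mem _ r (ha j x hx)

variable {p P M}

theorem bracketSub_le (N : Submodule (MonoidAlgebra (ZMod p) P) M) : bracketSub p P M N ≤ N := by
  rw [bracketSub, Submodule.span_le]
  rintro _ ⟨g, m, hm, rfl⟩
  exact sub_mem (N.smul_mem _ hm) hm

theorem bracketSeries_zero : bracketSeries p P M 0 = ⊤ := rfl

theorem bracketSeries_succ (k : ℕ) :
    bracketSeries p P M (k + 1) = bracketSub p P M (bracketSeries p P M k) :=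
  Function.iterate_succ_apply' _ _ _

theorem bracketSeries_antitone : Antitone (bracketSeries p P M) :=
  antitone_nat_of_succ_le fun k => by
    rw [bracketSeries_succ]
    exact bracketSub_le _

theorem sub_one_mul_mem_shiftIdeal (g : P) {a : MonoidAlgebra (ZMod p) P} {k : ℕ}
    (ha : a ∈ shiftIdeal p P M k) :
    (MonoidAlgebra.of (ZMod p) P g - 1) * a ∈ shiftIdeal p P M (k + 1) := by
  intro j x hx
  rw [add_right_comm, bracketSeries_succ, mul_smul, sub_smul, one_smul]
  exact Submodule.subset_span ⟨g, a • x, ha j x hx, rfl⟩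

open Pointwise in
theorem bracketSeries_le_span_shiftIdeal_smul (k : ℕ) :
    bracketSeries p P M k ≤
      Submodule.span _ ((shiftIdeal p P M k : Set (MonoidAlgebra (ZMod p) P)) • Set.univ) := by
  induction k with
  | zero =>
    intro x _
    refine Submodule.subset_span ⟨1, fun j y hy => ?_, x, trivial, one_smul _ x⟩
    rwa [one_smul, zero_add]
  | succ k ih =>
    rw [bracketSeries_succ, bracketSub, Submodule.span_le]
    rintro _ ⟨g, x, hx, rfl⟩
    have := Submodule.smul_mem_span_smul_of_mul_mem
      (fun a ha => sub_one_mul_mem_shiftIdeal g ha) (ih hx)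
    rwa [sub_smul, one_smul] at this

theorem exists_smul_ne_zero_of_bracketSeries_ne_bot {k : ℕ} (h : bracketSeries p P M k ≠ ⊥) :
    ∃ a ∈ shiftIdeal p P M k, ∃ m : M, a • m ≠ 0 := by
  by_contra! h0
  refine h (eq_bot_iff.2 ((bracketSeries_le_span_shiftIdeal_smul k).trans ?_))
  rw [Submodule.span_le]
  rintro _ ⟨a, ha, m, -, rfl⟩
  exact h0 a ha m

theorem UniserialFpP.eq_bot_of_bracketSub_eq (huni : UniserialFpP p P M) (hp : p ≠ 1)
    {N : Submodule (MonoidAlgebra (ZMod p) P) M} (h : bracketSub p P M N = N) : N = ⊥ := by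
  by_contra hN
  have hindex := huni N hN
  rw [h, AddSubgroup.relIndex_self] at hindex
  exact hp hindex.symm

theorem UniserialFpP.exists_bracketSeries_eq_bot [Finite M] (huni : UniserialFpP p P M)
    (hp : p ≠ 1) : ∃ n, bracketSeries p P M n = ⊥ := by
  obtain ⟨n, hn⟩ := WellFoundedLT.antitone_chain_condition
    (bracketSeries_antitone : Antitone (bracketSeries p P M))
  refine ⟨n, huni.eq_bot_of_bracketSub_eq hp ?_⟩
  rw [← bracketSeries_succ, hn (n + 1) n.le_succ]

end Series

section FixedPoints

theorem exists_smul_eq_smul_of_mem_fixedPts {m : M} (hm : m ∈ fixedPts p P M)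
    (r : MonoidAlgebra (ZMod p) P) : ∃ c : ZMod p, r • m = c • m := by
  induction r using MonoidAlgebra.induction_on with
  | of g => exact ⟨1, by rw [one_smul]; exact hm g⟩
  | add r s hr hs =>
    obtain ⟨c, hc⟩ := hr
    obtain ⟨d, hd⟩ := hs
    exact ⟨c + d, by rw [add_smul, hc, hd, add_smul]⟩
  | smul c r hr =>
    obtain ⟨d, hd⟩ := hr
    exact ⟨c * d, by rw [smul_assoc, hd, smul_smul]⟩

def fixedPtsSubmodule : Submodule (MonoidAlgebra (ZMod p) P) M :=
  { fixedPts p P M with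
    smul_mem' := fun r m hm => by
      obtain ⟨c, hc⟩ := exists_smul_eq_smul_of_mem_fixedPts p P M hm r
      rw [hc]
      exact (fixedPts p P M).smul_mem c hm }

variable {p P M}

theorem bracketSub_eq_bot_iff {N : Submodule (MonoidAlgebra (ZMod p) P) M} :
    bracketSub p P M N = ⊥ ↔ N ≤ fixedPtsSubmodule p P M := by
  rw [bracketSub, Submodule.span_eq_bot]
  constructor
  · intro h m hm g
    exact sub_eq_zero.1 (h _ ⟨g, m, hm, rfl⟩)
  · rintro h _ ⟨g, m, hm, rfl⟩
    exact sub_eq_zero.2 (h hm g)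

theorem UniserialFpP.card_fixedPtsSubmodule (huni : UniserialFpP p P M)
    (h : fixedPtsSubmodule p P M ≠ ⊥) :
    Nat.card (fixedPtsSubmodule p P M).toAddSubgroup = p := by
  have hindex := huni _ h
  rwa [bracketSub_eq_bot_iff.2 le_rfl, Submodule.bot_toAddSubgroup,
    AddSubgroup.relIndex_bot_left] at hindex

end FixedPoints

theorem exists_groupAlgebra_element_range_eq_fixedPts
    (hp : p.Prime)
    [Module.Finite (ZMod p) M] [Nontrivial M]
    (huni : UniserialFpP p P M) :
    ∃ a₀ : MonoidAlgebra (ZMod p) P,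
      Set.range (fun m : M => a₀ • m)
        = {m : M | ∀ g : P, MonoidAlgebra.of (ZMod p) P g • m = m} ∧
      ∀ x ∈ bracketSub p P M (⊤ : Submodule (MonoidAlgebra (ZMod p) P) M),
        a₀ • x = 0 := by
  have : Fact p.Prime := ⟨hp⟩
  have : Finite M := Module.finite_of_finite (ZMod p)
  obtain ⟨k, hk, hk1⟩ := Nat.exists_not_and_succ_of_not_zero_of_exists
    (p := fun n => bracketSeries p P M n = ⊥) (by simp [bracketSeries_zero])
    (huni.exists_bracketSeries_eq_bot hp.ne_one)
  obtain ⟨a, ha, m, ham⟩ := exists_smul_ne_zero_of_bracketSeries_ne_bot hk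
  have hfixed : ∀ m, a • m ∈ fixedPtsSubmodule p P M := fun m =>
    bracketSub_eq_bot_iff.1 ((bracketSeries_succ k).symm.trans hk1) (ha 0 m trivial)
  have hC : fixedPtsSubmodule p P M ≠ ⊥ :=
    (Submodule.ne_bot_iff _).2 ⟨a • m, hfixed m, ham⟩
  have hrange : (DistribSMul.toAddMonoidHom M a).range =
      (fixedPtsSubmodule p P M).toAddSubgroup := by
    refine AddSubgroup.eq_of_le_of_card_prime ?_ ?_
      (by rw [huni.card_fixedPtsSubmodule hC]; exact hp)
    · rintro _ ⟨m, rfl⟩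
      exact hfixed m
    · exact fun h => ham ((AddSubgroup.eq_bot_iff_forall _).1 h _ ⟨m, rfl⟩)
  refine ⟨a, congrArg SetLike.coe hrange, fun x hx => ?_⟩
  simpa [hk1] using ha 1 x hx
end

section
/- Let p be a prime, Q a finite p-group, and P = Q ≀ C_p = Q^p ⋊ C_p the wreath product with base group B = Q^p, where the generator of C_p permutes the p factors of B cyclically. Suppose x ∈ P ∖ B, y ∈ B centralizes x, and y^p = 1. Then y lies in the commutator subgroup [P,P]. -/
/-- The automorphism of `Q^p = (ZMod p → Q)` cyclically shifting coordinates by `c`. -/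
def shiftAut (p : ℕ) (Q : Type) [Group Q] (c : ZMod p) : MulAut (ZMod p → Q) where
  toFun x := fun i => x (i - c)
  invFun x := fun i => x (i + c)
  left_inv x := by funext i; simp
  right_inv x := by funext i; simp
  map_mul' x y := rfl

/-- The action of the cyclic group `C_p` on `Q^p` by cyclic coordinate shifts. -/
def shiftHom (p : ℕ) (Q : Type) [Group Q] :
    Multiplicative (ZMod p) →* MulAut (ZMod p → Q) :=
  MonoidHom.mk' (fun c => shiftAut p Q c.toAdd) (by
    intro a b
    apply MulEquiv.ext
    intro x
    funext i
    show x (i - (a * b).toAdd) = x (i - a.toAdd - b.toAdd)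
    rw [sub_sub]
    rfl)

/-- The wreath product `Q ≀ C_p` with base group `B = Q^p`, where a generator of
`C_p` cyclically permutes the `p` factors of `B`. -/
abbrev WreathCp (p : ℕ) (Q : Type) [Group Q] :=
  SemidirectProduct (ZMod p → Q) (Multiplicative (ZMod p)) (shiftHom p Q)

/-
Map `P` onto its abelianization `P^ab`. Conjugating by the top group `C_p` moves the coordinate
subgroups of `B` onto each other, so the image of `f ∈ B` in `P^ab` is `∏ᵢ ψ (f i)`, where
`ψ : Q → P^ab` comes from the 0-th coordinate. If `x ∉ B` shifts coordinates by `c ≠ 0` and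
commutes with `f`, then `f i` is conjugate to `f (i - c)` in `Q`; as `ψ` maps to an abelian group,
`i ↦ ψ (f i)` is `c`-periodic, hence constant on `ZMod p`. So `f` maps to
`ψ (f 0) ^ p = ψ (f 0 ^ p)`, which is trivial since `y ^ p = 1`.
-/

open SemidirectProduct

theorem ZMod.apply_eq_apply_zero_of_periodic {p : ℕ} [Fact p.Prime] {α : Type*}
    {g : ZMod p → α} {c : ZMod p} (hg : Function.Periodic g c) (hc : c ≠ 0) (i : ZMod p) :
    g i = g 0 := by
  have hi : i = (i * c⁻¹).val • c := by
    rw [nsmul_eq_mul, ZMod.natCast_zmod_val, inv_mul_cancel_right₀ hc]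
  rw [hi, hg.nsmul_eq]

namespace WreathCp

variable {p : ℕ} {Q : Type} [Group Q]

def coordToAbelianization (p : ℕ) (Q : Type) [Group Q] : Q →* Abelianization (WreathCp p Q) :=
  (Abelianization.of.comp inl).comp (MonoidHom.mulSingle (fun _ : ZMod p => Q) 0)

theorem shiftHom_apply (c : Multiplicative (ZMod p)) (f : ZMod p → Q) (i : ZMod p) :
    shiftHom p Q c f i = f (i - Multiplicative.toAdd c) :=
  rfl

theorem shiftHom_mulSingle_zero (i : ZMod p) (q : Q) :
    shiftHom p Q (Multiplicative.ofAdd i) (Pi.mulSingle 0 q) = Pi.mulSingle i q := by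
  funext j
  simp only [shiftHom_apply, toAdd_ofAdd, Pi.mulSingle_apply, sub_eq_zero]

theorem of_inl_mulSingle (i : ZMod p) (q : Q) :
    Abelianization.of (inl (φ := shiftHom p Q) (Pi.mulSingle i q)) =
      coordToAbelianization p Q q := by
  rw [← shiftHom_mulSingle_zero, inl_aut, map_mul, map_mul, mul_right_comm, ← map_mul,
    ← map_mul inr, mul_inv_cancel, map_one, map_one, one_mul]
  rfl

theorem of_inl_eq_prod [NeZero p] (f : ZMod p → Q) :
    Abelianization.of (inl (φ := shiftHom p Q) f) = ∏ i, coordToAbelianization p Q (f i) := by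
  have hom_eq : (Abelianization.of.comp inl : (ZMod p → Q) →* _) =
      ∏ i, (coordToAbelianization p Q).comp (Pi.evalMonoidHom _ i) :=
    MonoidHom.pi_ext fun i q => by
      simp [of_inl_mulSingle, Pi.mulSingle_apply, apply_ite (coordToAbelianization p Q)]
  simpa using DFunLike.congr_fun hom_eq f

theorem isConj_of_commute_inl (x : WreathCp p Q) (f : ZMod p → Q)
    (hxf : Commute x (inl f)) (i : ZMod p) :
    IsConj (f i) (f (i + Multiplicative.toAdd x.right)) := by
  have hleft := congrArg (fun z : WreathCp p Q => z.left (i + Multiplicative.toAdd x.right)) hxf.eq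
  simp only [mul_left, left_inl, right_inl, map_one, MulAut.one_apply, Pi.mul_apply,
    shiftHom_apply, add_sub_cancel_right] at hleft
  exact ⟨toUnits _, hleft⟩

end WreathCp

open WreathCp in
theorem mem_commutator_of_base_centralizes_general (p : ℕ) (hp : p.Prime)
    (Q : Type) [Group Q]
    (x y : WreathCp p Q)
    (hx : x ∉ (SemidirectProduct.inl : (ZMod p → Q) →* WreathCp p Q).range)
    (hy : y ∈ (SemidirectProduct.inl : (ZMod p → Q) →* WreathCp p Q).range)
    (hxy : x * y = y * x) (hyp : y ^ p = 1) :
    y ∈ commutator (WreathCp p Q) := by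
  have : Fact p.Prime := ⟨hp⟩
  obtain ⟨f, rfl⟩ := hy
  set ψ := coordToAbelianization p Q
  set c := Multiplicative.toAdd x.right
  have hc : c ≠ 0 := fun h =>
    hx <| by rw [range_inl_eq_ker_rightHom, MonoidHom.mem_ker]; exact h
  have hfp : f ^ p = 1 := inl_injective (φ := shiftHom p Q) (by rwa [map_pow, map_one])
  have hperiodic : Function.Periodic (fun i => ψ (f i)) c := fun i =>
    (isConj_iff_eq.mp (ψ.map_isConj (isConj_of_commute_inl x f hxy i))).symm
  rw [← Abelianization.ker_of, MonoidHom.mem_ker]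
  calc Abelianization.of (inl f) = ∏ i, ψ (f i) := of_inl_eq_prod f
    _ = ∏ _i : ZMod p, ψ (f 0) :=
        Finset.prod_congr rfl fun i _ => ZMod.apply_eq_apply_zero_of_periodic hperiodic hc i
    _ = ψ ((f ^ p) 0) := by simp [ZMod.card]
    _ = 1 := by rw [hfp, Pi.one_apply, map_one]

/-- Let `P = Q ≀ C_p` with base group `B = Q^p`.  If `x ∈ P ∖ B`, `y ∈ B`
centralizes `x`, and `y^p = 1`, then `y` lies in the commutator subgroup of `P`. -/
theorem mem_commutator_of_base_centralizes (p : ℕ) (hp : p.Prime)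
    (Q : Type) [Group Q] [Finite Q] (hQ : IsPGroup p Q)
    (x y : WreathCp p Q)
    (hx : x ∉ (SemidirectProduct.inl : (ZMod p → Q) →* WreathCp p Q).range)
    (hy : y ∈ (SemidirectProduct.inl : (ZMod p → Q) →* WreathCp p Q).range)
    (hxy : x * y = y * x) (hyp : y ^ p = 1) :
    y ∈ commutator (WreathCp p Q) :=
  mem_commutator_of_base_centralizes_general p hp Q x y hx hy hxy hyp
end

section
/- Let p be a prime, n ≥ 1, and P_n a Sylow p-subgroup of S_{p^n}. Then the maximum of |A| over all abelian subgroups A of P_n equals p^{p^{n−1}}. Consequently, the p-rank of P_n is p^{n−1}. -/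
/-!
Elements of an abelian group that agree at a point agree on its whole orbit, so an abelian
`p`-group acting faithfully on a finite set is determined by where it sends one representative of
each orbit. Its order is therefore at most the product of the orbit sizes `p ^ kᵢ`, while their sum
`∑ p ^ kᵢ ≥ p * ∑ kᵢ` is the size of the set; on `p ^ n` points this gives `p ^ p ^ (n - 1)`.
Conversely `(C_p) ^ (p ^ (n - 1))` embeds in `S_{p ^ n}`, each factor translating its own block of
`p` points, and as a `p`-group it lies in some Sylow subgroup, all of which are isomorphic.
-/

open Equiv MulAction

namespace MulAction

variable {G α : Type*} [CommGroup G] [MulAction G α]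

theorem smul_eq_smul_of_mem_orbit {g h : G} {a b : α} (hb : b ∈ orbit G a)
    (hgh : g • a = h • a) : g • b = h • b := by
  obtain ⟨c, rfl⟩ := hb
  rw [smul_comm g c a, smul_comm h c a, hgh]

theorem injective_smul_orbitRel_out [FaithfulSMul G α] :
    Function.Injective fun (g : G) (ω : orbitRel.Quotient G α) =>
      (⟨g • ω.out, mem_orbit _ g⟩ : orbit G ω.out) := by
  intro g h hgh
  refine eq_of_smul_eq_smul fun a => smul_eq_smul_of_mem_orbit ?_
    (congrArg Subtype.val (congrFun hgh (Quotient.mk _ a)))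
  exact mem_orbit_symm.mp (Quotient.mk_out (s := orbitRel G α) a)

end MulAction

theorem IsPGroup.card_le_pow_card_div_of_faithfulSMul {p : ℕ} [hp : Fact p.Prime]
    {G α : Type*} [CommGroup G] [MulAction G α] [FaithfulSMul G α] [Finite α]
    (hG : IsPGroup p G) : Nat.card G ≤ p ^ (Nat.card α / p) := by
  have : Fintype (orbitRel.Quotient G α) := Fintype.ofFinite _
  choose k hk using fun ω : orbitRel.Quotient G α => hG.card_orbit ω.out
  have hsum : ∑ ω, k ω * p ≤ Nat.card α := by
    rw [Nat.card_congr (selfEquivSigmaOrbits G α), Nat.card_sigma]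
    refine Finset.sum_le_sum fun ω _ => ?_
    rw [hk, mul_comm]
    exact Nat.mul_le_pow hp.out.ne_one _
  calc Nat.card G ≤ Nat.card (∀ ω : orbitRel.Quotient G α, orbit G ω.out) :=
        Nat.card_le_card_of_injective _ injective_smul_orbitRel_out
    _ = p ^ ∑ ω, k ω := by simp only [Nat.card_pi, hk, Finset.prod_pow_eq_pow_sum]
    _ ≤ p ^ (Nat.card α / p) :=
        Nat.pow_le_pow_right hp.out.pos <| (Nat.le_div_iff_mul_le hp.out.pos).2 <| by
          rwa [Finset.sum_mul]

theorem Sylow.exists_injective_of_isPGroup {p : ℕ} [Fact p.Prime] {G H : Type*} [Group G]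
    [Finite G] [Group H] (hH : IsPGroup p H) {φ : H →* G} (hφ : Function.Injective φ)
    (P : Sylow p G) : ∃ ψ : H →* P, Function.Injective ψ := by
  obtain ⟨Q, hQ⟩ := (hH.of_surjective _ φ.rangeRestrict_surjective).exists_le_sylow
  refine ⟨(Q.equiv P).toMonoidHom.comp (φ.codRestrict Q fun x => hQ ⟨x, rfl⟩), ?_⟩
  exact (Q.equiv P).injective.comp fun x y hxy => hφ (congrArg Subtype.val hxy)

theorem Equiv.Perm.exists_injective_pi_of_card_eq {ι H α : Type*} [Group H] [Finite ι]
    [Finite H] [Finite α] (h : Nat.card α = Nat.card ι * Nat.card H) :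
    ∃ φ : (ι → H) →* Perm α, Function.Injective φ := by
  have : Fintype ι := Fintype.ofFinite ι
  obtain ⟨e⟩ : Nonempty ((Σ _ : ι, H) ≃ α) := Finite.card_eq.mp <| by
    simp [h, Nat.card_sigma]
  refine ⟨(e.permCongrHom.toMonoidHom.comp (Perm.sigmaCongrRightHom fun _ => H)).comp
    ((toPermHom H H).compLeft ι), ?_⟩
  exact e.permCongrHom.injective.comp <| Perm.sigmaCongrRightHom_injective.comp <|
    toPerm_injective.comp_left

/-- Let `p` be a prime, `n ≥ 1` and `P` a Sylow `p`-subgroup of `S_{p^n}`.  The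
maximum of `|A|` over all abelian subgroups `A` of `P` equals `p ^ (p ^ (n-1))`:
there is an abelian subgroup of that order and every abelian subgroup has order at
most that.  Consequently the `p`-rank of `P` is `p ^ (n-1)`: there is an elementary
abelian subgroup of order `p ^ (p ^ (n-1))`, and every elementary abelian subgroup
has order at most `p ^ (p ^ (n-1))`. -/
theorem max_abelian_subgroup_card_sylow_symmetricGroup
    (p n : ℕ) (hp : p.Prime) (hn : 1 ≤ n)
    (P : Sylow p (Equiv.Perm (Fin (p ^ n)))) :
    (∃ A : Subgroup ↥(P : Subgroup (Equiv.Perm (Fin (p ^ n)))),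
      (∀ a ∈ A, ∀ b ∈ A, a * b = b * a) ∧ Nat.card A = p ^ p ^ (n - 1)) ∧
    (∀ A : Subgroup ↥(P : Subgroup (Equiv.Perm (Fin (p ^ n)))),
      (∀ a ∈ A, ∀ b ∈ A, a * b = b * a) → Nat.card A ≤ p ^ p ^ (n - 1)) ∧
    (∃ A : Subgroup ↥(P : Subgroup (Equiv.Perm (Fin (p ^ n)))),
      (∀ a ∈ A, ∀ b ∈ A, a * b = b * a) ∧ (∀ a ∈ A, a ^ p = 1) ∧
      Nat.card A = p ^ p ^ (n - 1)) ∧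
    (∀ A : Subgroup ↥(P : Subgroup (Equiv.Perm (Fin (p ^ n)))),
      (∀ a ∈ A, ∀ b ∈ A, a * b = b * a) → (∀ a ∈ A, a ^ p = 1) →
      Nat.card A ≤ p ^ p ^ (n - 1)) := by
  have := Fact.mk hp
  have hpn : p ^ n = p ^ (n - 1) * p := by rw [← pow_succ, Nat.sub_add_cancel hn]
  have upper : ∀ A : Subgroup P, (∀ a ∈ A, ∀ b ∈ A, a * b = b * a) →
      Nat.card A ≤ p ^ p ^ (n - 1) := by
    intro A hA
    have : IsMulCommutative A := ⟨⟨fun a b => Subtype.ext (hA a a.2 b b.2)⟩⟩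
    open scoped IsMulCommutative in
    simpa [hpn, hp.pos] using
      (P.isPGroup'.to_subgroup A).card_le_pow_card_div_of_faithfulSMul (α := Fin (p ^ n))
  obtain ⟨φ, hφ⟩ := Perm.exists_injective_pi_of_card_eq (ι := Fin (p ^ (n - 1)))
    (H := Multiplicative (ZMod p)) (α := Fin (p ^ n)) (by simp [hpn])
  have hcard : Nat.card (Fin (p ^ (n - 1)) → Multiplicative (ZMod p)) = p ^ p ^ (n - 1) := by
    simp
  obtain ⟨ψ, hψ⟩ := P.exists_injective_of_isPGroup (IsPGroup.of_card hcard) hφ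
  have comm : ∀ a ∈ ψ.range, ∀ b ∈ ψ.range, a * b = b * a := by
    rintro _ ⟨x, rfl⟩ _ ⟨y, rfl⟩
    rw [← map_mul, mul_comm, map_mul]
  have exponent : ∀ a ∈ ψ.range, a ^ p = 1 := by
    rintro _ ⟨x, rfl⟩
    rw [← map_pow, ← ψ.map_one]
    congr 1
    funext i
    simpa using pow_card_eq_one' (x := x i)
  have card : Nat.card ψ.range = p ^ p ^ (n - 1) := by
    rw [← hcard, Nat.card_congr (MonoidHom.ofInjective hψ).toEquiv]
  exact ⟨⟨_, comm, card⟩, upper, ⟨_, comm, exponent, card⟩, fun A hA _ => upper A hA⟩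
end
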